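/- arXiv:1609.02901 — 2 statements merged into one kernel-verified Lean document; each statement's English description precedes it below -/
import Mathlib

section
/- Let K be a convex body in ℝ^{d+1} such that for every boundary point x there is a ball of radius r > 0 contained in K tangent to ∂K at x, and a ball of radius R ≥ r containing K tangent to ∂K at x. Let ℓ be a line through a boundary point q making angle θ ∈ (0,π/2] with the supporting hyperplane at q. Then the chord length Δ = length(ℓ ∩ K) satisfies r·sin(θ) ≤ Δ ≤ 2R·sin(θ). -/
/-!
Parametrize the line isometrically by `t ↦ q + t • v`. A ball of radius `ρ` tangent at `q` with
inner normal `u` is cut by it in the parameter interval `[0, 2ρ sin θ]`. The chord of `K` is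
squeezed between the chords of the inner ball (length `2r sin θ ≥ r sin θ`) and of the outer
ball (length `2R sin θ`).
-/

open Metric Real Set

section LineThroughBall

variable {E : Type*} [NormedAddCommGroup E] [InnerProductSpace ℝ E] {q u v : E}

theorem isometry_add_smul (hv : ‖v‖ = 1) (q : E) : Isometry fun t : ℝ => q + t • v :=
  (isometry_add_left q).comp (LinearIsometry.toSpanSingleton ℝ E hv).isometry

theorem diam_range_add_smul_inter (hv : ‖v‖ = 1) (K : Set E) :
    diam ((range fun t : ℝ => q + t • v) ∩ K) = diam ((fun t : ℝ => q + t • v) ⁻¹' K) := by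
  rw [← image_preimage_eq_range_inter, (isometry_add_smul hv q).diam_image]

theorem norm_smul_sub_smul_sq (hu : ‖u‖ = 1) (hv : ‖v‖ = 1) (t ρ : ℝ) :
    ‖t • v - ρ • u‖ ^ 2 = t ^ 2 - 2 * t * ρ * inner ℝ v u + ρ ^ 2 := by
  rw [norm_sub_sq_real, real_inner_smul_left, real_inner_smul_right, norm_smul, norm_smul,
    hu, hv, Real.norm_eq_abs, Real.norm_eq_abs, mul_one, mul_one, sq_abs, sq_abs]
  ring

theorem preimage_add_smul_closedBall_eq_Icc (hu : ‖u‖ = 1) (hv : ‖v‖ = 1) {ρ : ℝ} (hρ : 0 ≤ ρ)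
    (hvu : 0 ≤ inner ℝ v u) :
    (fun t : ℝ => q + t • v) ⁻¹' closedBall (q + ρ • u) ρ = Icc 0 (2 * ρ * inner ℝ v u) := by
  ext t
  have hdist : dist (q + t • v) (q + ρ • u) = ‖t • v - ρ • u‖ := by
    rw [dist_add_left, dist_eq_norm]
  rw [mem_preimage, mem_closedBall, hdist, ← sq_le_sq₀ (norm_nonneg _) hρ,
    norm_smul_sub_smul_sq hu hv, mem_Icc]
  constructor
  · intro h
    constructor <;> nlinarith [mul_nonneg hρ hvu]
  · rintro ⟨h₀, h₁⟩
    nlinarith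

end LineThroughBall

theorem stmt6_general {d : ℕ}
    (K : Set (EuclideanSpace ℝ (Fin (d + 1))))
    (r R : ℝ) (hr : 0 < r) (hrR : r ≤ R)
    (q : EuclideanSpace ℝ (Fin (d + 1)))
    (u : EuclideanSpace ℝ (Fin (d + 1))) (hu : ‖u‖ = 1)
    (huin : closedBall (q + r • u) r ⊆ K) (huout : K ⊆ closedBall (q + R • u) R)
    (v : EuclideanSpace ℝ (Fin (d + 1))) (hv : ‖v‖ = 1)
    (θ : ℝ) (hθ0 : 0 < θ) (hθ1 : θ ≤ π / 2)
    (hangle : inner ℝ v u = Real.sin θ)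
    (Δ : ℝ) (hΔ : Δ = Metric.diam ((Set.range fun t : ℝ => q + t • v) ∩ K)) :
    r * Real.sin θ ≤ Δ ∧ Δ ≤ 2 * R * Real.sin θ := by
  have hsin : 0 ≤ sin θ :=
    sin_nonneg_of_nonneg_of_le_pi hθ0.le (hθ1.trans (half_le_self pi_nonneg))
  have hvu : 0 ≤ inner ℝ v u := hangle ▸ hsin
  set T := (fun t : ℝ => q + t • v) ⁻¹' K
  have hinner : Icc 0 (2 * r * sin θ) ⊆ T := by
    rw [← hangle, ← preimage_add_smul_closedBall_eq_Icc hu hv hr.le hvu]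
    exact preimage_mono huin
  have houter : T ⊆ Icc 0 (2 * R * sin θ) := by
    rw [← hangle, ← preimage_add_smul_closedBall_eq_Icc hu hv (hr.le.trans hrR) hvu]
    exact preimage_mono huout
  rw [hΔ, diam_range_add_smul_inter hv]
  constructor
  · calc r * sin θ ≤ 2 * r * sin θ := by nlinarith
      _ = diam (Icc 0 (2 * r * sin θ)) := by rw [Real.diam_Icc (by positivity), sub_zero]
      _ ≤ diam T := diam_mono hinner (isBounded_Icc _ _ |>.subset houter)
  · calc diam T ≤ diam (Icc 0 (2 * R * sin θ)) := diam_mono houter (isBounded_Icc _ _)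
      _ = 2 * R * sin θ := by rw [Real.diam_Icc (by nlinarith), sub_zero]

/-- Let `K` be a convex body in ℝ^{d+1} satisfying rolling-ball conditions: at every
boundary point `x` there is a tangent ball of radius `r` inside `K` and a tangent ball of
radius `R` containing `K`.  A line through a boundary point `q`, with unit direction `v`
making angle `θ ∈ (0, π/2]` with the supporting hyperplane at `q` (whose inward unit
normal is `u`), cuts a chord of length `Δ` with `r·sin θ ≤ Δ ≤ 2R·sin θ`. -/
theorem stmt6 {d : ℕ}
    (K : Set (EuclideanSpace ℝ (Fin (d + 1))))
    (hKconv : Convex ℝ K) (hKcomp : IsCompact K) (hKint : (interior K).Nonempty)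
    (r R : ℝ) (hr : 0 < r) (hrR : r ≤ R)
    (hroll : ∀ x ∈ frontier K, ∃ u : EuclideanSpace ℝ (Fin (d + 1)), ‖u‖ = 1 ∧
      closedBall (x + r • u) r ⊆ K ∧ K ⊆ closedBall (x + R • u) R)
    (q : EuclideanSpace ℝ (Fin (d + 1))) (hq : q ∈ frontier K)
    (u : EuclideanSpace ℝ (Fin (d + 1))) (hu : ‖u‖ = 1)
    (huin : closedBall (q + r • u) r ⊆ K) (huout : K ⊆ closedBall (q + R • u) R)
    (v : EuclideanSpace ℝ (Fin (d + 1))) (hv : ‖v‖ = 1)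
    (θ : ℝ) (hθ0 : 0 < θ) (hθ1 : θ ≤ π / 2)
    (hangle : inner ℝ v u = Real.sin θ)
    (Δ : ℝ) (hΔ : Δ = Metric.diam ((Set.range fun t : ℝ => q + t • v) ∩ K)) :
    r * Real.sin θ ≤ Δ ∧ Δ ≤ 2 * R * Real.sin θ :=
  stmt6_general K r R hr hrR q u hu huin huout v hv θ hθ0 hθ1 hangle Δ hΔ
end

section
/- Let v, w be unit vectors in ℝ^n and let P be a linear subspace with orthogonal projection 𝒫. Suppose 𝒫^⊥ v = 0 (i.e., v ∈ P) and the projection 𝒫w is a nonnegative scalar multiple of v. Then ‖v − w‖ ≤ 2‖𝒫^⊥ w‖. -/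
open RealInnerProductSpace

/-!
Write `w = l • v + q` with `q = 𝒫^⊥ w ⟂ v`. Pythagoras gives `1 = l² + ‖q‖²` and
`‖v - w‖² = (1 - l)² + ‖q‖²`; since `0 ≤ l ≤ 1`, `(1 - l)² ≤ 1 - l² = ‖q‖²`, so in fact
`‖v - w‖ ≤ √2 ‖q‖`.
-/

theorem norm_sub_sq_le_two_mul_sq_of_eq_smul_add_orthogonal {E : Type*}
    [NormedAddCommGroup E] [InnerProductSpace ℝ E] {v w q : E} {l : ℝ}
    (hv : ‖v‖ = 1) (hw : ‖w‖ = 1) (hl : 0 ≤ l) (hvq : ⟪v, q⟫ = 0) (hwq : w = l • v + q) :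
    ‖v - w‖ ^ 2 ≤ 2 * ‖q‖ ^ 2 := by
  have hw_sq : 1 = l ^ 2 + ‖q‖ ^ 2 := by
    have h := norm_add_sq_eq_norm_sq_add_norm_sq_real (x := l • v) (y := q)
      (by rw [real_inner_smul_left, hvq, mul_zero])
    rw [← hwq, hw, norm_smul, hv, Real.norm_of_nonneg hl] at h
    linarith
  have hvw_sq : ‖v - w‖ ^ 2 = (1 - l) ^ 2 + ‖q‖ ^ 2 := by
    have h := norm_sub_sq_eq_norm_sq_add_norm_sq_real (x := (1 - l) • v) (y := q)
      (by rw [real_inner_smul_left, hvq, mul_zero])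
    rw [norm_smul, hv, Real.norm_eq_abs, mul_one, abs_mul_abs_self] at h
    rw [hwq, show v - (l • v + q) = (1 - l) • v - q by rw [sub_smul, one_smul]; abel, sq, h]
    ring
  have hl_le_one : l ≤ 1 := by nlinarith [sq_nonneg ‖q‖]
  nlinarith [mul_nonneg hl (sub_nonneg.mpr hl_le_one)]

/-- If `v, w` are unit vectors in ℝⁿ, `v` lies in a subspace `P`, and the orthogonal
projection of `w` onto `P` is a nonnegative multiple of `v`, then
`‖v − w‖ ≤ 2‖𝒫^⊥ w‖`, where `𝒫^⊥ w = w − 𝒫 w` is the component of `w` orthogonal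
to `P`. -/
theorem stmt14 {n : ℕ}
    (P : Submodule ℝ (EuclideanSpace ℝ (Fin n)))
    (v w : EuclideanSpace ℝ (Fin n)) (hv : ‖v‖ = 1) (hw : ‖w‖ = 1)
    (hvP : v ∈ P)
    (l : ℝ) (hl : 0 ≤ l)
    (hproj : (P.orthogonalProjection w : EuclideanSpace ℝ (Fin n)) = l • v) :
    ‖v - w‖ ≤ 2 * ‖w - (P.orthogonalProjection w : EuclideanSpace ℝ (Fin n))‖ := by
  set q := w - (P.orthogonalProjection w : EuclideanSpace ℝ (Fin n)) with hq
  have hvq : ⟪v, q⟫ = 0 := P.sub_starProjection_mem_orthogonal w v hvP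
  have hwq : w = l • v + q := by rw [hq, hproj]; abel
  have h := norm_sub_sq_le_two_mul_sq_of_eq_smul_add_orthogonal hv hw hl hvq hwq
  nlinarith [norm_nonneg (v - w), norm_nonneg q]
end
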